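/- arXiv:1305.7489 — 5 statements merged into one kernel-verified Lean document; each statement's English description precedes it below -/
import Mathlib

section
/- Let d ≥ 1. There exists a unitary operator U on the symmetric subspace Sym²(ℂ^d) ⊂ ℂ^d ⊗ ℂ^d such that for every nonzero vector v ∈ ℂ^d and every vector w ∈ ℂ^d one has U(v ⊗ v) ≠ w ⊗ w (i.e., U is a bosonic universal entangler), if and only if d ≥ 3. -/
/-- The tensor product `v ⊗ w` of two vectors of `ℂ^n`, realized inside
`ℂ^n ⊗ ℂ^n ≅ ℂ^(n × n)` (with the induced inner product). -/
noncomputable def tp {n : Type*} [Fintype n] (v w : EuclideanSpace ℂ n) :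
    EuclideanSpace ℂ (n × n) :=
  WithLp.toLp 2 (fun p : n × n => v p.1 * w p.2)

/-- The symmetric subspace `Sym²(ℂ^n) ⊆ ℂ^n ⊗ ℂ^n`: the vectors fixed by the
swap `v ⊗ w ↦ w ⊗ v`. -/
noncomputable def symSub (n : Type*) [Fintype n] :
    Submodule ℂ (EuclideanSpace ℂ (n × n)) where
  carrier := {T | ∀ i j : n, T (i, j) = T (j, i)}
  add_mem' := by
    intro T S hT hS i j
    simp only [PiLp.add_apply, hT i j, hS i j]
  zero_mem' := by intro _ _; rfl
  smul_mem' := by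
    intro c T hT i j
    simp only [PiLp.smul_apply, hT i j]

/-- The bosonic product state `v ⊗ v` as an element of the symmetric subspace. -/
noncomputable def tpSym {n : Type*} [Fintype n] (v : EuclideanSpace ℂ n) :
    symSub n :=
  ⟨tp v v, fun i j => show v i * v j = v j * v i from mul_comm _ _⟩

variable {d : ℕ} [NeZero d]

/-- underlying map of the entangler -/
noncomputable def gmap (T : EuclideanSpace ℂ (Fin d × Fin d)) :
    EuclideanSpace ℂ (Fin d × Fin d) :=
  WithLp.toLp 2 fun p => if p.1 = p.2 then (Real.sqrt 2 : ℂ) * T (p.1, p.1 + 1)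
    else if p.2 = p.1 + 1 then T (p.1, p.1) / (Real.sqrt 2 : ℂ)
    else if p.1 = p.2 + 1 then T (p.2, p.2) / (Real.sqrt 2 : ℂ)
    else T p

lemma fin_one_ne_zero (hd : 3 ≤ d) : (1 : Fin d) ≠ 0 := by
  intro h
  have := congrArg Fin.val h
  simp [Fin.val_one', Nat.mod_eq_of_lt (by omega : 1 < d)] at this

lemma fin_two_ne_zero (hd : 3 ≤ d) : (1 + 1 : Fin d) ≠ 0 := by
  intro h
  have := congrArg Fin.val h
  rw [Fin.val_add] at this
  simp [Fin.val_one', Nat.mod_eq_of_lt (by omega : 1 < d),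
    Nat.mod_eq_of_lt (by omega : 2 < d)] at this

lemma fin_add_one_ne (hd : 3 ≤ d) : ∀ k : Fin d, k ≠ k + 1 :=
  fun k h => fin_one_ne_zero hd (by
    have := left_eq_add.mp h; exact this)

lemma fin_add_two_ne (hd : 3 ≤ d) : ∀ k : Fin d, k ≠ k + 1 + 1 :=
  fun k h => fin_two_ne_zero hd (by
    rw [add_assoc] at h
    exact left_eq_add.mp h)

lemma gmap_mem (hd : 3 ≤ d) {T : EuclideanSpace ℂ (Fin d × Fin d)}
    (hT : T ∈ symSub (Fin d)) : gmap T ∈ symSub (Fin d) := by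
  intro i j
  simp only [gmap, PiLp.toLp_apply]
  split_ifs with a b c e f g h k l m n o p q r
  all_goals try (first | rfl | (subst a; rfl))
  all_goals try exact hT i j
  all_goals exfalso
  all_goals
    first
      | exact b a.symm
      | exact fin_add_one_ne hd _ (a.symm.trans c)
      | exact fin_add_one_ne hd _ (a.trans e)
      | exact a g.symm
      | exact a l.symm
      | exact a m.symm
      | exact fin_add_two_ne hd _ (by rw [f] at h; exact h)
      | exact fin_add_two_ne hd _ (by rw [h] at f; exact f)
      | exact fin_add_one_ne hd _ (by rw [l] at k; exact k)
      | exact fin_add_one_ne hd _ (by rw [k] at l; exact l)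

noncomputable def gLin (d : ℕ) [NeZero d] :
    EuclideanSpace ℂ (Fin d × Fin d) →ₗ[ℂ] EuclideanSpace ℂ (Fin d × Fin d) where
  toFun := gmap
  map_add' T S := by
    ext p
    simp only [gmap, PiLp.add_apply, PiLp.toLp_apply]
    split_ifs <;> ring
  map_smul' c T := by
    ext p
    simp only [gmap, PiLp.toLp_apply, PiLp.smul_apply, smul_eq_mul, RingHom.id_apply]
    split_ifs <;> ring

lemma sqrt2C_ne : ((Real.sqrt 2 : ℝ) : ℂ) ≠ 0 := by
  simp [Real.sqrt_eq_zero']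

lemma sqrt2C_sq : ((Real.sqrt 2 : ℝ) : ℂ) * ((Real.sqrt 2 : ℝ) : ℂ) = 2 := by
  rw [← Complex.ofReal_mul, Real.mul_self_sqrt (by norm_num)]
  norm_num

lemma gmap_invol (hd : 3 ≤ d) {T : EuclideanSpace ℂ (Fin d × Fin d)}
    (hT : T ∈ symSub (Fin d)) : gmap (gmap T) = T := by
  ext p
  obtain ⟨i, j⟩ := p
  rcases eq_or_ne i j with rfl | a
  · show (if i = i then _ else _) = T (i,i)
    rw [if_pos rfl]
    show ((Real.sqrt 2 : ℝ) : ℂ) * (if i = i + 1 then _ else if i + 1 = i + 1 then T (i,i) / _ else _) = T (i,i)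
    rw [if_neg (fin_add_one_ne hd i), if_pos rfl]
    field_simp
  · rcases eq_or_ne j (i + 1) with rfl | b
    · show (if i = i + 1 then _ else if i + 1 = i + 1 then (gmap T) (i, i) / _ else _) = T (i, i+1)
      rw [if_neg (fin_add_one_ne hd i), if_pos rfl]
      show (if i = i then ((Real.sqrt 2 : ℝ) : ℂ) * T (i, i+1) else _) / _ = T (i, i+1)
      rw [if_pos rfl, mul_div_cancel_left₀ _ sqrt2C_ne]
    · rcases eq_or_ne i (j + 1) with rfl | c
      · show (if j + 1 = j then _ else if j = j + 1 + 1 then _ else if j + 1 = j + 1 then (gmap T) (j, j) / _ else _) = T (j+1, j)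
        rw [if_neg a, if_neg (fin_add_two_ne hd j), if_pos rfl]
        show (if j = j then ((Real.sqrt 2 : ℝ) : ℂ) * T (j, j+1) else _) / _ = T (j+1, j)
        rw [if_pos rfl, mul_div_cancel_left₀ _ sqrt2C_ne]
        exact hT j (j+1)
      · show (if i = j then _ else if j = i + 1 then _ else if i = j + 1 then _ else (gmap T) (i, j)) = T (i, j)
        rw [if_neg a, if_neg b, if_neg c]
        show (if i = j then _ else if j = i + 1 then _ else if i = j + 1 then _ else T (i, j)) = T (i, j)
        rw [if_neg a, if_neg b, if_neg c]

lemma gmap_diag {T : EuclideanSpace ℂ (Fin d × Fin d)} (i : Fin d) :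
    gmap T (i, i) = ((Real.sqrt 2 : ℝ) : ℂ) * T (i, i+1) := by
  simp [gmap]

lemma gmap_up (hd : 3 ≤ d) {T : EuclideanSpace ℂ (Fin d × Fin d)} (i : Fin d) :
    gmap T (i, i+1) = T (i, i) / ((Real.sqrt 2 : ℝ) : ℂ) := by
  simp [gmap, fin_add_one_ne hd i]

lemma gmap_down (hd : 3 ≤ d) {T : EuclideanSpace ℂ (Fin d × Fin d)} (j : Fin d) :
    gmap T (j+1, j) = T (j, j) / ((Real.sqrt 2 : ℝ) : ℂ) := by
  have h1 : (j+1 : Fin d) ≠ j := fun h => fin_add_one_ne hd j h.symm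
  have h2 : j ≠ (j+1)+1 := fin_add_two_ne hd j
  simp [gmap, h1, h2]

lemma gmap_other (hd : 3 ≤ d) {T : EuclideanSpace ℂ (Fin d × Fin d)} (i j : Fin d)
    (h1 : i ≠ j) (h2 : j ≠ i+1) (h3 : i ≠ j+1) : gmap T (i,j) = T (i,j) := by
  simp [gmap, h1, h2, h3]

lemma norm_sqrt2_mul (z : ℂ) : ‖((Real.sqrt 2 : ℝ) : ℂ) * z‖^2 = 2 * ‖z‖^2 := by
  rw [norm_mul, mul_pow, Complex.norm_real, Real.norm_eq_abs,
    abs_of_nonneg (Real.sqrt_nonneg 2), Real.sq_sqrt (by norm_num)]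

lemma norm_div_sqrt2 (z : ℂ) : ‖z / ((Real.sqrt 2 : ℝ) : ℂ)‖^2 = ‖z‖^2 / 2 := by
  rw [norm_div, div_pow, Complex.norm_real, Real.norm_eq_abs,
    abs_of_nonneg (Real.sqrt_nonneg 2), Real.sq_sqrt (by norm_num)]

lemma gmap_norm_sum (hd : 3 ≤ d) {T : EuclideanSpace ℂ (Fin d × Fin d)}
    (hT : T ∈ symSub (Fin d)) :
    ∑ p : Fin d × Fin d, ‖gmap T p‖^2 = ∑ p : Fin d × Fin d, ‖T p‖^2 := by
  have key : ∀ p : Fin d × Fin d, ‖gmap T p‖^2 = ‖T p‖^2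
      + (if p.1 = p.2 then 2*‖T (p.1, p.1+1)‖^2 - ‖T (p.1,p.1)‖^2 else 0)
      + (if p.2 = p.1 + 1 then ‖T (p.1,p.1)‖^2/2 - ‖T (p.1, p.1+1)‖^2 else 0)
      + (if p.1 = p.2 + 1 then ‖T (p.2,p.2)‖^2/2 - ‖T (p.2+1, p.2)‖^2 else 0) := by
    rintro ⟨i, j⟩
    rcases eq_or_ne i j with rfl | a
    · rw [gmap_diag i, if_pos rfl, if_neg (fun h => fin_add_one_ne hd i h),
        if_neg (fun h => fin_add_one_ne hd i h), norm_sqrt2_mul]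
      ring
    · rcases eq_or_ne j (i+1) with rfl | b
      · rw [gmap_up hd i, if_neg a, if_pos rfl, if_neg (fin_add_two_ne hd i), norm_div_sqrt2]
        ring
      · rcases eq_or_ne i (j+1) with rfl | c
        · rw [gmap_down hd j, if_neg (fun h => fin_add_one_ne hd j h.symm),
            if_neg (fin_add_two_ne hd j), if_pos rfl, norm_div_sqrt2]
          ring
        · rw [gmap_other hd i j a b c, if_neg a, if_neg b, if_neg c]
          ring
  calc ∑ p : Fin d × Fin d, ‖gmap T p‖^2
      = ∑ p : Fin d × Fin d, (‖T p‖^2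
        + (if p.1 = p.2 then 2*‖T (p.1, p.1+1)‖^2 - ‖T (p.1,p.1)‖^2 else 0)
        + (if p.2 = p.1 + 1 then ‖T (p.1,p.1)‖^2/2 - ‖T (p.1, p.1+1)‖^2 else 0)
        + (if p.1 = p.2 + 1 then ‖T (p.2,p.2)‖^2/2 - ‖T (p.2+1, p.2)‖^2 else 0)) := by
        exact Finset.sum_congr rfl (fun p _ => key p)
    _ = ∑ p : Fin d × Fin d, ‖T p‖^2 := by
        rw [Finset.sum_add_distrib, Finset.sum_add_distrib, Finset.sum_add_distrib]
        have e1 : ∑ p : Fin d × Fin d,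
            (if p.1 = p.2 then 2*‖T (p.1, p.1+1)‖^2 - ‖T (p.1,p.1)‖^2 else 0)
            = ∑ i : Fin d, (2*‖T (i, i+1)‖^2 - ‖T (i,i)‖^2) := by
          rw [Fintype.sum_prod_type]
          refine Finset.sum_congr rfl (fun i _ => ?_)
          simp
        have e2 : ∑ p : Fin d × Fin d,
            (if p.2 = p.1 + 1 then ‖T (p.1,p.1)‖^2/2 - ‖T (p.1, p.1+1)‖^2 else 0)
            = ∑ i : Fin d, (‖T (i,i)‖^2/2 - ‖T (i, i+1)‖^2) := by
          rw [Fintype.sum_prod_type]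
          refine Finset.sum_congr rfl (fun i _ => ?_)
          simp
        have e3 : ∑ p : Fin d × Fin d,
            (if p.1 = p.2 + 1 then ‖T (p.2,p.2)‖^2/2 - ‖T (p.2+1, p.2)‖^2 else 0)
            = ∑ j : Fin d, (‖T (j,j)‖^2/2 - ‖T (j, j+1)‖^2) := by
          rw [Fintype.sum_prod_type_right]
          refine Finset.sum_congr rfl (fun j _ => ?_)
          simp only [Finset.sum_ite_eq', Finset.mem_univ, if_true]
          rw [hT (j+1) j]
        rw [e1, e2, e3]
        have hz : ∑ i : Fin d, (2*‖T (i, i+1)‖^2 - ‖T (i,i)‖^2)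
            + ∑ i : Fin d, (‖T (i,i)‖^2/2 - ‖T (i, i+1)‖^2)
            + ∑ j : Fin d, (‖T (j,j)‖^2/2 - ‖T (j, j+1)‖^2) = 0 := by
          rw [← Finset.sum_add_distrib, ← Finset.sum_add_distrib]
          have hz2 : ∀ i : Fin d, (2*‖T (i, i+1)‖^2 - ‖T (i,i)‖^2
              + (‖T (i,i)‖^2/2 - ‖T (i, i+1)‖^2) + (‖T (i,i)‖^2/2 - ‖T (i, i+1)‖^2)) = 0 :=
            fun i => by ring
          rw [Finset.sum_congr rfl (fun i _ => hz2 i), Finset.sum_const_zero]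
        linarith [hz]

noncomputable def Uent (d : ℕ) [NeZero d] (hd : 3 ≤ d) :
    symSub (Fin d) ≃ₗᵢ[ℂ] symSub (Fin d) where
  toFun T := ⟨gmap T.val, gmap_mem hd T.2⟩
  map_add' T S := Subtype.ext (by
    show gmap (T.val + S.val) = gmap T.val + gmap S.val
    exact (gLin d).map_add T.val S.val)
  map_smul' c T := Subtype.ext (by
    show gmap (c • T.val) = c • gmap T.val
    exact (gLin d).map_smul c T.val)
  invFun T := ⟨gmap T.val, gmap_mem hd T.2⟩
  left_inv T := Subtype.ext (gmap_invol hd T.2)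
  right_inv T := Subtype.ext (gmap_invol hd T.2)
  norm_map' T := by
    show ‖gmap T.val‖ = ‖T.val‖
    rw [EuclideanSpace.norm_eq, EuclideanSpace.norm_eq]
    rw [gmap_norm_sum hd T.2]

open Fin.NatCast Fin.CommRing in
lemma Uent_spec (hd : 3 ≤ d) (v : EuclideanSpace ℂ (Fin d)) (hv : v ≠ 0)
    (w : EuclideanSpace ℂ (Fin d)) : Uent d hd (tpSym v) ≠ tpSym w := by
  intro h
  set s : ℂ := ((Real.sqrt 2 : ℝ) : ℂ) with hs
  have hval : gmap (tp v v) = tp w w := congrArg Subtype.val h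
  have D : ∀ i : Fin d, w i * w i = s * (v i * v (i+1)) := by
    intro i
    have : gmap (tp v v) (i, i) = tp w w (i, i) := by rw [hval]
    rw [gmap_diag i] at this
    exact this.symm
  have A : ∀ i : Fin d, w i * w (i+1) = (v i * v i) / s := by
    intro i
    have : gmap (tp v v) (i, i+1) = tp w w (i, i+1) := by rw [hval]
    rw [gmap_up hd i] at this
    exact this.symm
  have hs2 : s * s = 2 := sqrt2C_sq
  have hsne : s ≠ 0 := sqrt2C_ne
  have E : ∀ i : Fin d, (v i)^4 = 4 * (v i * (v (i+1))^2 * v (i+1+1)) := by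
    intro i
    have e1 : (w i * w (i+1)) * (w i * w (i+1)) = (w i * w i) * (w (i+1) * w (i+1)) := by ring
    rw [A i, D i, D (i+1)] at e1
    field_simp at e1
    linear_combination e1 + (s*s + 2) * (v i * (v (i+1))^2 * v (i+1+1)) * hs2
  have step : ∀ i : Fin d, v i ≠ 0 → v (i+1) ≠ 0 := by
    intro i hi h1
    have h4 : (v i)^4 = 0 := by rw [E i, h1]; ring
    exact hi (pow_eq_zero_iff (by norm_num : (4:ℕ) ≠ 0) |>.mp h4)
  have hex : ∃ i, v i ≠ 0 := by
    by_contra hc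
    push_neg at hc
    exact hv (by ext i; simpa using hc i)
  obtain ⟨i0, hi0⟩ := hex
  have hall : ∀ j : Fin d, v j ≠ 0 := by
    have hk : ∀ k : ℕ, v (i0 + (k : Fin d)) ≠ 0 := by
      intro k
      induction k with
      | zero => rwa [Nat.cast_zero, add_zero]
      | succ n ih =>
        have h2 := step _ ih
        have : (i0 + ((n:ℕ) : Fin d)) + 1 = i0 + (((n+1 : ℕ)) : Fin d) := by push_cast; ring
        rwa [this] at h2
    intro j
    have := hk ((j - i0).val)
    rwa [Fin.cast_val_eq_self, show i0 + (j - i0) = j from by ring] at this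
  have hP : ∏ i : Fin d, v i ≠ 0 := Finset.prod_ne_zero_iff.mpr (fun i _ => hall i)
  have E' : ∀ i : Fin d, (v i)^3 = 4 * ((v (i+1))^2 * v (i+1+1)) := by
    intro i
    apply mul_left_cancel₀ (hall i)
    linear_combination E i
  have prodE : ∏ i : Fin d, (v i)^3 = ∏ i : Fin d, (4 * ((v (i+1))^2 * v (i+1+1))) :=
    Finset.prod_congr rfl (fun i _ => E' i)
  have r1 : ∏ i : Fin d, v (i+1) = ∏ i : Fin d, v i :=
    Fintype.prod_equiv (Equiv.addRight 1) _ _ (fun i => rfl)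
  have r2 : ∏ i : Fin d, v (i+1+1) = ∏ i : Fin d, v i :=
    Fintype.prod_equiv (Equiv.addRight (1+1)) _ _ (fun i => by rw [add_assoc]; rfl)
  rw [Finset.prod_mul_distrib, Finset.prod_mul_distrib, Finset.prod_const,
    Finset.prod_pow, Finset.prod_pow, r1, r2, Finset.card_univ, Fintype.card_fin] at prodE
  have h41 : (4:ℂ)^d = 1 := by
    have hP3 : (∏ i : Fin d, v i)^3 ≠ 0 := pow_ne_zero _ hP
    have : (4:ℂ)^d * (∏ i : Fin d, v i)^3 = 1 * (∏ i : Fin d, v i)^3 := by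
      linear_combination (-1 : ℂ) * prodE
    exact mul_right_cancel₀ hP3 this
  have h2 : ((4^d:ℕ):ℂ) = ((1:ℕ):ℂ) := by push_cast; exact h41
  have h3 : (4:ℕ)^d = 1 := Nat.cast_injective h2
  have h4 : (4:ℕ)^d ≥ 4^3 := Nat.pow_le_pow_right (by norm_num) hd
  simp at h4; omega

lemma sqC (c : ℂ) : ∃ z : ℂ, z * z = c := by
  obtain ⟨z, hz⟩ := IsAlgClosed.exists_pow_nat_eq c (n := 2) (by norm_num)
  exact ⟨z, by rw [← hz]; ring⟩

lemma no_BUE_one (U : symSub (Fin 1) ≃ₗᵢ[ℂ] symSub (Fin 1))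
    (hU : ∀ v : EuclideanSpace ℂ (Fin 1), v ≠ 0 →
      ∀ w : EuclideanSpace ℂ (Fin 1), U (tpSym v) ≠ tpSym w) : False := by
  have hvne : (WithLp.toLp 2 (fun _ => 1) : EuclideanSpace ℂ (Fin 1)) ≠ 0 := by
    intro h
    have := congrArg (fun x : EuclideanSpace ℂ (Fin 1) => x 0) h
    simp at this
  obtain ⟨z, hz⟩ := sqC ((U (tpSym (WithLp.toLp 2 (fun _ => 1)))).val (0, 0))
  apply hU (WithLp.toLp 2 (fun _ => 1)) hvne (WithLp.toLp 2 (fun _ => z))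
  apply Subtype.ext
  ext p
  have hp : p = ((0 : Fin 1), (0 : Fin 1)) := Subsingleton.elim _ _
  rw [hp]
  exact hz.symm

lemma rank1_of_det (T : EuclideanSpace ℂ (Fin 2 × Fin 2))
    (hsym : T (0, 1) = T (1, 0))
    (hdet : T (0, 0) * T (1, 1) = T (0, 1) * T (0, 1)) :
    ∃ w : EuclideanSpace ℂ (Fin 2), tp w w = T := by
  rcases eq_or_ne (T (0, 0)) 0 with h0 | h0
  · have h01 : T (0, 1) = 0 := by
      have : T (0, 1) * T (0, 1) = 0 := by rw [← hdet, h0]; ring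
      exact mul_self_eq_zero.mp this
    obtain ⟨z, hz⟩ := sqC (T (1, 1))
    refine ⟨WithLp.toLp 2 ![0, z], ?_⟩
    ext p
    obtain ⟨i, j⟩ := p
    have h10 : T (1, 0) = 0 := hsym ▸ h01
    fin_cases i <;> fin_cases j <;> simp [tp]
    · exact h0.symm
    · exact h01.symm
    · exact h10.symm
    · exact hz
  · obtain ⟨z, hz⟩ := sqC (T (0, 0))
    have hzne : z ≠ 0 := fun h => h0 (by rw [← hz, h]; ring)
    refine ⟨WithLp.toLp 2 ![z, T (0, 1) / z], ?_⟩
    ext p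
    obtain ⟨i, j⟩ := p
    fin_cases i <;> fin_cases j <;> simp [tp]
    · exact hz
    · rw [mul_div_cancel₀ _ hzne]
    · rw [div_mul_cancel₀ _ hzne]; exact hsym
    · show T (0,1) / z * (T (0,1) / z) = T (1,1)
      have h11 : T ((1 : Fin 2), (1 : Fin 2)) = T (0,1) * T (0,1) / T (0,0) := by
        rw [eq_div_iff h0]
        linear_combination hdet
      rw [h11, ← hz]
      field_simp

open Polynomial in
lemma no_BUE_two (U : symSub (Fin 2) ≃ₗᵢ[ℂ] symSub (Fin 2))
    (hU : ∀ v : EuclideanSpace ℂ (Fin 2), v ≠ 0 →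
      ∀ w : EuclideanSpace ℂ (Fin 2), U (tpSym v) ≠ tpSym w) : False := by
  set e0 : EuclideanSpace ℂ (Fin 2) := WithLp.toLp 2 ![1, 0] with he0
  set e1 : EuclideanSpace ℂ (Fin 2) := WithLp.toLp 2 ![0, 1] with he1
  set on2 : EuclideanSpace ℂ (Fin 2) := WithLp.toLp 2 ![1, 1] with hon
  set A : symSub (Fin 2) := U (tpSym e0) with hA
  set Cc : symSub (Fin 2) := U (tpSym e1) with hCc
  set B : symSub (Fin 2) := U (tpSym on2) - A - Cc with hB
  have hdec : ∀ z : ℂ, U (tpSym (WithLp.toLp 2 ![z, 1])) = (z*z) • A + z • B + Cc := by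
    intro z
    have hM : tpSym (WithLp.toLp 2 ![z,1] : EuclideanSpace ℂ (Fin 2)) =
        (z*z) • tpSym e0 + z • (tpSym on2 - tpSym e0 - tpSym e1) + tpSym e1 := by
      apply Subtype.ext
      ext pr
      obtain ⟨i, j⟩ := pr
      fin_cases i <;> fin_cases j <;>
        simp [tpSym, tp, he0, he1, hon, PiLp.add_apply, PiLp.smul_apply,
          PiLp.sub_apply, smul_eq_mul] <;> ring
    rw [hM, map_add, map_add, map_smul, map_smul, map_sub, map_sub, hB, hA, hCc]
  have hent : ∀ (z : ℂ) (pr : Fin 2 × Fin 2), (U (tpSym (WithLp.toLp 2 ![z,1]))).val pr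
      = (z*z) * A.val pr + z * B.val pr + Cc.val pr := by
    intro z pr
    rw [hdec z]
    simp [PiLp.add_apply, PiLp.smul_apply, smul_eq_mul]
  set a0 := A.val (0,0) with ha0
  set a1 := A.val (1,1) with ha1
  set a2 := A.val (0,1) with ha2
  set b0 := B.val (0,0) with hb0
  set b1 := B.val (1,1) with hb1
  set b2 := B.val (0,1) with hb2
  set c0 := Cc.val (0,0) with hc0
  set c1 := Cc.val (1,1) with hc1
  set c2 := Cc.val (0,1) with hc2
  by_cases hα : a0 * a1 - a2 * a2 = 0
  · obtain ⟨w, hw⟩ := rank1_of_det A.val (A.2 0 1) (by linear_combination hα)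
    refine hU e0 ?_ w (Subtype.ext hw.symm)
    intro h
    have := congrArg (fun x : EuclideanSpace ℂ (Fin 2) => x 0) h
    simp [he0] at this
  · set p : Polynomial ℂ := C (a0*a1 - a2*a2) * X^4 + C (a0*b1 + b0*a1 - 2*a2*b2) * X^3
      + C (a0*c1 + b0*b1 + c0*a1 - 2*a2*c2 - b2*b2) * X^2
      + C (b0*c1 + c0*b1 - 2*b2*c2) * X + C (c0*c1 - c2*c2) with hp
    have hdeg : p.degree = 4 := by
      rw [hp]
      compute_degree!
    obtain ⟨z, hz⟩ := Complex.exists_root (f := p) (by rw [hdeg]; norm_num)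
    have hroot : p.eval z = 0 := hz
    have heval : p.eval z = (a0*a1 - a2*a2) * z^4 + (a0*b1 + b0*a1 - 2*a2*b2) * z^3
        + (a0*c1 + b0*b1 + c0*a1 - 2*a2*c2 - b2*b2) * z^2
        + (b0*c1 + c0*b1 - 2*b2*c2) * z + (c0*c1 - c2*c2) := by
      rw [hp]
      simp only [Polynomial.eval_add, Polynomial.eval_mul, Polynomial.eval_pow,
        Polynomial.eval_C, Polynomial.eval_X]
    have hdet : (U (tpSym (WithLp.toLp 2 ![z,1]))).val (0,0) * (U (tpSym (WithLp.toLp 2 ![z,1]))).val (1,1)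
        = (U (tpSym (WithLp.toLp 2 ![z,1]))).val (0,1) * (U (tpSym (WithLp.toLp 2 ![z,1]))).val (0,1) := by
      rw [hent z (0,0), hent z (1,1), hent z (0,1), ← ha0, ← ha1, ← ha2,
        ← hb0, ← hb1, ← hb2, ← hc0, ← hc1, ← hc2]
      linear_combination hroot - heval
    obtain ⟨w, hw⟩ := rank1_of_det (U (tpSym (WithLp.toLp 2 ![z,1]))).val ((U (tpSym (WithLp.toLp 2 ![z,1]))).2 0 1) hdet
    refine hU (WithLp.toLp 2 ![z,1]) ?_ w (Subtype.ext hw.symm)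
    intro h
    have := congrArg (fun x : EuclideanSpace ℂ (Fin 2) => x 1) h
    simp at this

/-- A bosonic universal entangler (a unitary `U` on `Sym²(ℂ^d)` with
`U(v ⊗ v) ≠ w ⊗ w` for all nonzero `v` and all `w`) exists iff `d ≥ 3`. -/
theorem bosonic_universal_entangler_exists_iff (d : ℕ) (hd : 1 ≤ d) :
    (∃ U : symSub (Fin d) ≃ₗᵢ[ℂ] symSub (Fin d),
      ∀ v : EuclideanSpace ℂ (Fin d), v ≠ 0 →
        ∀ w : EuclideanSpace ℂ (Fin d), U (tpSym v) ≠ tpSym w) ↔ 3 ≤ d := by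
  constructor
  · rintro ⟨U, hU⟩
    by_contra hlt
    push_neg at hlt
    interval_cases d
    · exact no_BUE_one U hU
    · exact no_BUE_two U hU
  · intro hd3
    haveI : NeZero d := ⟨by omega⟩
    exact ⟨Uent d hd3, fun v hv w => Uent_spec hd3 v hv w⟩
end

section
/- Let d ≥ 3 and let a : ℤ/dℤ → ℂ satisfy the cyclic system of equations a_i² + 2·a_{i+1}·a_{i+2} = 0 for every i ∈ ℤ/dℤ. Then a_i = 0 for every i. -/
/-- If `d ≥ 3` and `a : ℤ/dℤ → ℂ` satisfies the cyclic system
`a_i² + 2 a_{i+1} a_{i+2} = 0` for all `i`, then `a = 0`. -/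
theorem cyclic_system_E1_only_zero_solution (d : ℕ) [NeZero d] (hd : 3 ≤ d)
    (a : ZMod d → ℂ)
    (h : ∀ i : ZMod d, a i ^ 2 + 2 * a (i + 1) * a (i + 2) = 0) :
    ∀ i : ZMod d, a i = 0 := by
  -- Step 1: some coordinate vanishes, via the product of all equations.
  have hshift : ∀ c : ZMod d, ∏ i : ZMod d, a (i + c) = ∏ i : ZMod d, a i := by
    intro c
    exact Fintype.prod_equiv (Equiv.addRight c) _ _ (fun i => rfl)
  set P : ℂ := ∏ i : ZMod d, a i with hPdef
  have hprod : P ^ 2 = (-2) ^ d * P ^ 2 := by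
    have h1 : ∏ i : ZMod d, (a i ^ 2) = P ^ 2 := by
      rw [← Finset.prod_pow]
    have h2 : ∀ i : ZMod d, a i ^ 2 = (-2) * (a (i + 1) * a (i + 2)) := by
      intro i
      have := h i
      ring_nf
      ring_nf at this
      linear_combination this
    calc P ^ 2 = ∏ i : ZMod d, (a i ^ 2) := h1.symm
      _ = ∏ i : ZMod d, ((-2) * (a (i + 1) * a (i + 2))) := by
          exact Finset.prod_congr rfl (fun i _ => h2 i)
      _ = (-2) ^ d * ((∏ i : ZMod d, a (i + 1)) * (∏ i : ZMod d, a (i + 2))) := by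
          rw [Finset.prod_mul_distrib, Finset.prod_const, Finset.prod_mul_distrib,
            Finset.card_univ, ZMod.card]
      _ = (-2) ^ d * P ^ 2 := by rw [hshift 1, hshift 2]; ring
  have hne : ((-2 : ℂ)) ^ d ≠ 1 := by
    intro h1
    have := congrArg (fun z : ℂ => ‖z‖) h1
    simp [map_pow] at this
    have h8 : (2:ℝ) ^ 3 ≤ (2:ℝ) ^ d := by
      apply pow_le_pow_right₀ (by norm_num) hd
    rw [this] at h8
    norm_num at h8
  have hP0 : P = 0 := by
    have : P ^ 2 * (1 - (-2) ^ d) = 0 := by linear_combination hprod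
    rcases mul_eq_zero.mp this with h' | h'
    · exact pow_eq_zero_iff two_ne_zero |>.mp h'
    · exact absurd (by linear_combination -h') hne
  obtain ⟨j, _, hj⟩ := Finset.prod_eq_zero_iff.mp hP0
  -- Step 2: a zero propagates backwards.
  have step : ∀ k : ZMod d, a k = 0 → a (k - 1) = 0 := by
    intro k hk
    have := h (k - 1)
    have h1 : k - 1 + 1 = k := by ring
    have h2 : k - 1 + 2 = k + 1 := by ring
    rw [h1, h2, hk] at this
    have : a (k - 1) ^ 2 = 0 := by linear_combination this
    exact pow_eq_zero_iff two_ne_zero |>.mp this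
  have back : ∀ n : ℕ, a (j - n) = 0 := by
    intro n
    induction n with
    | zero => simpa using hj
    | succ m ih =>
        have := step (j - m) ih
        have he : j - (m : ZMod d) - 1 = j - ((m : ℕ) + 1 : ℕ) := by push_cast; ring
        rwa [he] at this
  intro i
  have := back (j - i).val
  rwa [ZMod.natCast_val, ZMod.cast_id, sub_sub_cancel] at this
end

section
/- Let d ≥ 3, index the standard basis (e_i) of ℂ^d cyclically by i ∈ ℤ/dℤ, and let S ⊂ ℂ^d ⊗ ℂ^d be the linear span of the d vectors s_i = e_i ⊗ e_i + e_{i+1} ⊗ e_{i+2} + e_{i+2} ⊗ e_{i+1}, i ∈ ℤ/dℤ. If v ∈ ℂ^d is such that v ⊗ v is orthogonal to every element of S, then v = 0. That is, the orthogonal complement of S contains no bosonic product state. -/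
/-- (Re-registration of the standard instance, with high priority, to speed up
instance resolution.) -/
noncomputable instance (priority := 10000) euclideanInnerInst (n : Type*) [Fintype n] :
    InnerProductSpace ℂ (EuclideanSpace ℂ n) := by infer_instance

/-- The standard basis vector `e_i` of `ℂ^d`, indexed cyclically by `ZMod d`. -/
noncomputable def e {d : ℕ} [NeZero d] (i : ZMod d) : EuclideanSpace ℂ (ZMod d) :=
  EuclideanSpace.single i 1

/-- The vector `s_i = e_i ⊗ e_i + e_{i+1} ⊗ e_{i+2} + e_{i+2} ⊗ e_{i+1}`
in `ℂ^d ⊗ ℂ^d`. -/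
noncomputable def sVec (d : ℕ) [NeZero d] (i : ZMod d) :
    EuclideanSpace ℂ (ZMod d × ZMod d) :=
  tp (e i) (e i) + tp (e (i + 1)) (e (i + 2)) + tp (e (i + 2)) (e (i + 1))

lemma inner_tp_e {d : ℕ} [NeZero d] (a b : ZMod d) (v : EuclideanSpace ℂ (ZMod d)) :
    (inner ℂ (tp (e a) (e b)) (tp v v) : ℂ) = v a * v b := by
  simp [tp, e, PiLp.inner_apply, Fintype.sum_prod_type, EuclideanSpace.single_apply,
    apply_ite, Finset.sum_ite_eq]

/-- For `d ≥ 3`, if `v ⊗ v` is orthogonal to every element of the span `S` of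
the vectors `s_i = e_i ⊗ e_i + e_{i+1} ⊗ e_{i+2} + e_{i+2} ⊗ e_{i+1}`
(`i ∈ ℤ/dℤ`), then `v = 0`: the orthogonal complement of `S` contains no
bosonic product state. -/

theorem no_product_state_in_orthogonal_complement (d : ℕ) [NeZero d] (hd : 3 ≤ d)
    (v : EuclideanSpace ℂ (ZMod d))
    (hv : tp v v ∈ (Submodule.span ℂ (Set.range (sVec d)))ᗮ) :
    v = 0 := by
  have key : ∀ i : ZMod d, v i * v i + 2 * (v (i + 1) * v (i + 2)) = 0 := by
    intro i
    have h := hv (sVec d i) (Submodule.subset_span ⟨i, rfl⟩)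
    rw [sVec, inner_add_left, inner_add_left, inner_tp_e, inner_tp_e, inner_tp_e] at h
    linear_combination h
  -- case on whether some coordinate vanishes
  by_cases hz : ∃ j : ZMod d, v j = 0
  · obtain ⟨j, hj⟩ := hz
    have back : ∀ n : ℕ, v (j - n) = 0 := by
      intro n
      induction n with
      | zero => convert hj using 2; push_cast; ring
      | succ n ih =>
        have hk := key (j - (n + 1 : ℕ))
        have h1 : (j - (n + 1 : ℕ)) + 1 = j - n := by push_cast; ring
        rw [h1, ih] at hk
        have : v (j - (n + 1 : ℕ)) * v (j - (n + 1 : ℕ)) = 0 := by linear_combination hk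
        exact mul_self_eq_zero.mp this
    ext k
    have := back (j - k).val
    rwa [ZMod.natCast_val, ZMod.cast_id, sub_sub_cancel] at this
  · push_neg at hz
    exfalso
    set f : ZMod d → ℝ := fun i => ‖v i‖ with hf
    have keyf : ∀ i : ZMod d, f i * f i = 2 * (f (i + 1) * f (i + 2)) := by
      intro i
      have := key i
      have h2 : v i * v i = -(2 * (v (i + 1) * v (i + 2))) := by linear_combination this
      have := congrArg (fun z : ℂ => ‖z‖) h2
      simpa [norm_mul, hf] using this
    have hpos : 0 < ∏ i : ZMod d, f i :=
      Finset.prod_pos fun i _ => norm_pos_iff.mpr (hz i)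
    have hshift : ∀ c : ZMod d, (∏ i : ZMod d, f (i + c)) = ∏ i : ZMod d, f i := by
      intro c
      exact Fintype.prod_equiv (Equiv.addRight c) _ _ fun i => rfl
    have hprod : (∏ i : ZMod d, f i) * (∏ i : ZMod d, f i)
        = 2 ^ d * ((∏ i : ZMod d, f i) * (∏ i : ZMod d, f i)) := by
      calc (∏ i : ZMod d, f i) * (∏ i : ZMod d, f i)
          = ∏ i : ZMod d, (f i * f i) := by rw [Finset.prod_mul_distrib]
        _ = ∏ i : ZMod d, (2 * (f (i + 1) * f (i + 2))) := by
            exact Finset.prod_congr rfl fun i _ => keyf i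
        _ = 2 ^ d * ((∏ i : ZMod d, f (i + 1)) * (∏ i : ZMod d, f (i + 2))) := by
            rw [Finset.prod_mul_distrib, Finset.prod_const, Finset.prod_mul_distrib]
            simp [ZMod.card]
        _ = 2 ^ d * ((∏ i : ZMod d, f i) * (∏ i : ZMod d, f i)) := by
            rw [hshift 1, hshift 2]
    have hne : (∏ i : ZMod d, f i) * (∏ i : ZMod d, f i) ≠ 0 := by positivity
    have h1 : (2 : ℝ) ^ d = 1 := by
      field_simp at hprod
      nlinarith [hprod]
    have : (2:ℝ)^3 ≤ (2:ℝ)^d := pow_le_pow_right₀ (by norm_num) hd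
    nlinarith
end

section
/- Let d ≥ 5 and let x, y : ℤ/dℤ → ℂ satisfy: (1) x_i·x_j + y_i·y_j = 0 for all i, j ∈ ℤ/dℤ with j ∉ {i−1, i, i+1}, and (2) x_i·x_{i+1} + y_i·y_{i+1} = x_{i−1}² + y_{i−1}² for all i ∈ ℤ/dℤ. Then x_i² + y_i² = 0 for every i ∈ ℤ/dℤ. -/
/-- The polynomial system (E2): if `d ≥ 5` and `x, y : ℤ/dℤ → ℂ` satisfy
(1) `x_i x_j + y_i y_j = 0` whenever `j ∉ {i-1, i, i+1}`, and
(2) `x_i x_{i+1} + y_i y_{i+1} = x_{i-1}² + y_{i-1}²` for all `i`,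
then `x_i² + y_i² = 0` for all `i`. -/
theorem cyclic_system_E2_only_zero_solution (d : ℕ) [NeZero d] (hd : 5 ≤ d)
    (x y : ZMod d → ℂ)
    (h1 : ∀ i j : ZMod d, j ≠ i - 1 → j ≠ i → j ≠ i + 1 →
      x i * x j + y i * y j = 0)
    (h2 : ∀ i : ZMod d, x i * x (i + 1) + y i * y (i + 1)
      = x (i - 1) ^ 2 + y (i - 1) ^ 2) :
    ∀ i : ZMod d, x i ^ 2 + y i ^ 2 = 0 := by
  have hne : ∀ k : ℕ, 0 < k → k < d → ((k : ℕ) : ZMod d) ≠ 0 := by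
    intro k hk1 hk2 h
    rw [ZMod.natCast_eq_zero_iff] at h
    exact absurd (Nat.le_of_dvd hk1 h) (by omega)
  have h1' : (1 : ZMod d) ≠ 0 := by simpa using hne 1 (by omega) (by omega)
  have h2' : (2 : ZMod d) ≠ 0 := by
    have := hne 2 (by omega) (by omega); simpa using this
  have h3' : (3 : ZMod d) ≠ 0 := by
    have := hne 3 (by omega) (by omega); simpa using this
  have h4' : (4 : ZMod d) ≠ 0 := by
    have := hne 4 (by omega) (by omega); simpa using this
  intro i
  by_contra hc
  -- hypotheses from h1
  have e02 : x i * x (i + 2) + y i * y (i + 2) = 0 := by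
    refine h1 i (i + 2) ?_ ?_ ?_ <;> intro h
    · exact h3' (by linear_combination h)
    · exact h2' (by linear_combination h)
    · exact h1' (by linear_combination h)
  have e03 : x i * x (i + 3) + y i * y (i + 3) = 0 := by
    refine h1 i (i + 3) ?_ ?_ ?_ <;> intro h
    · exact h4' (by linear_combination h)
    · exact h3' (by linear_combination h)
    · exact h2' (by linear_combination h)
  have e24 : x (i + 2) * x (i + 4) + y (i + 2) * y (i + 4) = 0 := by
    refine h1 (i + 2) (i + 4) ?_ ?_ ?_ <;> intro h
    · exact h3' (by linear_combination h)
    · exact h2' (by linear_combination h)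
    · exact h1' (by linear_combination h)
  -- hypotheses from h2
  have h2a : x (i + 1) * x (i + 2) + y (i + 1) * y (i + 2) = x i ^ 2 + y i ^ 2 := by
    have := h2 (i + 1)
    simpa [show i + 1 + 1 = i + 2 from by ring, show i + 1 - 1 = i from by ring] using this
  have h2b : x (i + 3) * x (i + 4) + y (i + 3) * y (i + 4)
      = x (i + 2) ^ 2 + y (i + 2) ^ 2 := by
    have := h2 (i + 3)
    simpa [show i + 3 + 1 = i + 4 from by ring, show i + 3 - 1 = i + 2 from by ring] using this
  -- Step 1: v_{i+2} and v_{i+3} are parallel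
  have hxD : x i * (x (i + 2) * y (i + 3) - y (i + 2) * x (i + 3)) = 0 := by
    linear_combination y (i + 3) * e02 - y (i + 2) * e03
  have hyD : y i * (x (i + 2) * y (i + 3) - y (i + 2) * x (i + 3)) = 0 := by
    linear_combination x (i + 2) * e03 - x (i + 3) * e02
  have hcD : (x i ^ 2 + y i ^ 2) * (x (i + 2) * y (i + 3) - y (i + 2) * x (i + 3)) = 0 := by
    linear_combination x i * hxD + y i * hyD
  have hD0 : x (i + 2) * y (i + 3) - y (i + 2) * x (i + 3) = 0 :=
    (mul_eq_zero.mp hcD).resolve_left hc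
  -- Step 2: c_{i+2} = 0
  have hc2sq : (x (i + 2) ^ 2 + y (i + 2) ^ 2) ^ 2 = 0 := by
    linear_combination (x (i + 2) * x (i + 3) + y (i + 2) * y (i + 3)) * e24
      + (x (i + 2) * y (i + 4) - y (i + 2) * x (i + 4)) * hD0
      - (x (i + 2) ^ 2 + y (i + 2) ^ 2) * h2b
  have hc2 : x (i + 2) ^ 2 + y (i + 2) ^ 2 = 0 := by
    exact pow_eq_zero_iff (by norm_num) |>.mp hc2sq
  -- Step 3: e_i = 0
  have hesq : (x i * y (i + 2) - y i * x (i + 2)) ^ 2 = 0 := by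
    linear_combination (x i ^ 2 + y i ^ 2) * hc2 - (x i * x (i + 2) + y i * y (i + 2)) * e02
  have he : x i * y (i + 2) - y i * x (i + 2) = 0 :=
    pow_eq_zero_iff (by norm_num) |>.mp hesq
  -- Final: c_i² = 0
  have hcsq : (x i ^ 2 + y i ^ 2) ^ 2 = 0 := by
    linear_combination -(x i ^ 2 + y i ^ 2) * h2a
      + (x i * x (i + 1) + y i * y (i + 1)) * e02
      + (x i * y (i + 1) - y i * x (i + 1)) * he
  exact hc (pow_eq_zero_iff (by norm_num) |>.mp hcsq)
end

section
/- Let d ≥ 3 and let a, b : ℤ/dℤ → ℂ satisfy the cyclic system a_i² = √2·b_i·b_{i+1} and b_i² = √2·a_i·a_{i+1} for every i ∈ ℤ/dℤ. Then a_i = 0 and b_i = 0 for every i. -/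
/-- If `d ≥ 3` and `a, b : ℤ/dℤ → ℂ` satisfy the cyclic system
`a_i² = √2 b_i b_{i+1}` and `b_i² = √2 a_i a_{i+1}` for all `i`, then
`a = 0` and `b = 0`. -/
theorem cyclic_permutation_system_only_zero_solution (d : ℕ) [NeZero d] (hd : 3 ≤ d)
    (a b : ZMod d → ℂ)
    (h1 : ∀ i : ZMod d, a i ^ 2 = (Real.sqrt 2 : ℂ) * (b i * b (i + 1)))
    (h2 : ∀ i : ZMod d, b i ^ 2 = (Real.sqrt 2 : ℂ) * (a i * a (i + 1))) :
    ∀ i : ZMod d, a i = 0 ∧ b i = 0 := by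
  classical
  have hshift : ∀ f : ZMod d → ℂ, (∏ i : ZMod d, f (i + 1)) = ∏ i : ZMod d, f i :=
    fun f => Fintype.prod_equiv (Equiv.addRight (1 : ZMod d)) (fun i => f (i + 1)) f
      (fun i => rfl)
  have hcard : Fintype.card (ZMod d) = d := ZMod.card d
  have key : ∀ (u v : ZMod d → ℂ),
      (∀ i : ZMod d, u i ^ 2 = (Real.sqrt 2 : ℂ) * (v i * v (i + 1))) →
      (∏ i : ZMod d, u i) ^ 2 =
        ((Real.sqrt 2 : ℂ)) ^ d * (∏ i : ZMod d, v i) ^ 2 := by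
    intro u v h
    calc (∏ i : ZMod d, u i) ^ 2 = ∏ i : ZMod d, u i ^ 2 := by
          rw [Finset.prod_pow]
      _ = ∏ i : ZMod d, ((Real.sqrt 2 : ℂ) * (v i * v (i + 1))) := by
          exact Finset.prod_congr rfl fun i _ => h i
      _ = ((Real.sqrt 2 : ℂ)) ^ d *
            ((∏ i : ZMod d, v i) * ∏ i : ZMod d, v (i + 1)) := by
          rw [Finset.prod_mul_distrib, Finset.prod_mul_distrib, Finset.prod_const,
            Finset.card_univ, hcard]
      _ = ((Real.sqrt 2 : ℂ)) ^ d * (∏ i : ZMod d, v i) ^ 2 := by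
          rw [hshift v]; ring
  have hPa := key a b h1
  have hPb := key b a h2
  set P : ℂ := ∏ i : ZMod d, a i with hPdef
  set Q : ℂ := ∏ i : ZMod d, b i with hQdef
  have hsq : ((Real.sqrt 2 : ℂ)) ^ d * ((Real.sqrt 2 : ℂ)) ^ d = (2 : ℂ) ^ d := by
    have h22 : (Real.sqrt 2 : ℂ) * Real.sqrt 2 = 2 := by
      norm_cast
      exact Real.mul_self_sqrt (by norm_num)
    rw [← mul_pow, h22]
  have hPP : P ^ 2 = (2 : ℂ) ^ d * P ^ 2 := by
    calc P ^ 2 = ((Real.sqrt 2 : ℂ)) ^ d * Q ^ 2 := hPa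
      _ = ((Real.sqrt 2 : ℂ)) ^ d * (((Real.sqrt 2 : ℂ)) ^ d * P ^ 2) := by rw [hPb]
      _ = (2 : ℂ) ^ d * P ^ 2 := by rw [← mul_assoc, hsq]
  have h2d : (2 : ℂ) ^ d ≠ 1 := by
    have : ((2 : ℕ) : ℂ) ^ d ≠ ((1 : ℕ) : ℂ) := by
      rw [← Nat.cast_pow]
      exact_mod_cast Nat.ne_of_gt (Nat.one_lt_two_pow (by omega))
    simpa using this
  have hP0 : P = 0 := by
    have : P ^ 2 * ((2 : ℂ) ^ d - 1) = 0 := by linear_combination -hPP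
    rcases mul_eq_zero.mp this with h | h
    · exact pow_eq_zero_iff two_ne_zero |>.mp h
    · exact absurd (sub_eq_zero.mp h) h2d
  obtain ⟨j, -, hj⟩ := Finset.prod_eq_zero_iff.mp hP0
  -- propagation of zeros
  have hb : ∀ k : ZMod d, a k = 0 → b k = 0 := by
    intro k hk
    have : b k ^ 2 = 0 := by rw [h2 k, hk]; ring
    exact pow_eq_zero_iff two_ne_zero |>.mp this
  have hstep : ∀ k : ZMod d, a k = 0 → a (k - 1) = 0 := by
    intro k hk
    have hbk : b k = 0 := hb k hk
    have hbk1 : b (k - 1) = 0 := by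
      have h := h2 (k - 1)
      rw [show k - 1 + 1 = k by ring, hk] at h
      exact pow_eq_zero_iff two_ne_zero |>.mp (by rw [h]; ring)
    have h := h1 (k - 1)
    rw [show k - 1 + 1 = k by ring, hbk1, hbk] at h
    exact pow_eq_zero_iff two_ne_zero |>.mp (by rw [h]; ring)
  have hall : ∀ n : ℕ, a (j - (n : ZMod d)) = 0 := by
    intro n
    induction n with
    | zero => simpa using hj
    | succ n ih =>
      have := hstep _ ih
      have heq : j - ((n : ZMod d) + 1) = j - (n : ZMod d) - 1 := by ring
      push_cast
      rw [heq]
      exact this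
  intro i
  have ha : a i = 0 := by
    have := hall (j - i).val
    rwa [ZMod.natCast_val, ZMod.cast_id, sub_sub_cancel] at this
  exact ⟨ha, hb i ha⟩
end
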